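/- Let U be an F_q-space of odd dimension n (q even) with nondegenerate symmetric bilinear form b, and let T be an invertible self-adjoint operator with T + E_{a,a} skew-symmetric (a ≠ 0). Then ker(T + E_{a,a}) = ⟨aT^{-1}⟩ and b(a, aT^{-1}) ≠ 0. -/

import Mathlib

/-!
For `S = T + E_{a,a}`, the form `(x, y) ↦ b(x, S y)` is alternating, and it would be nondegenerate
if `S` were invertible. But an alternating matrix of odd size is singular in every characteristic:
it is a specialisation of the generic alternating matrix `N` over `ℤ[X_ij]`, where
`det N = det Nᵀ = -det N` forces `det N = 0`. Hence `S` has a nonzero kernel. Since `S u = 0`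
means `T u = -b(u, a) a`, the kernel lies in the line through `w = T⁻¹ a`, so it is that line;
and `b(w, a) = 0` would give `T w = S w = 0`.
-/

/-- The rank-one operator `x ↦ b(x,a) • c`. -/
def Eop {F U : Type*} [Field F] [AddCommGroup U] [Module F U]
    (B : LinearMap.BilinForm F U) (a c : U) : U →ₗ[F] U :=
  (B.flip a).smulRight c

/-- `T` is self-adjoint with respect to `B`. -/
def IsSelfAdjOp {F U : Type*} [Field F] [AddCommGroup U] [Module F U]
    (B : LinearMap.BilinForm F U) (T : U →ₗ[F] U) : Prop :=
  ∀ x y : U, B (T x) y = B x (T y)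

/-- `T` is skew-symmetric (alternating) with respect to `B`. -/
def IsSkewOp {F U : Type*} [Field F] [AddCommGroup U] [Module F U]
    (B : LinearMap.BilinForm F U) (T : U →ₗ[F] U) : Prop :=
  ∀ x : U, B x (T x) = 0

open Module LinearMap Matrix

theorem Matrix.det_eq_zero_of_transpose_eq_neg_of_odd {R : Type*} [CommRing R] [NoZeroDivisors R]
    [CharZero R] {n : Type*} [Fintype n] [DecidableEq n] (hn : Odd (Fintype.card n))
    {M : Matrix n n R} (hM : Mᵀ = -M) : M.det = 0 := by
  rw [← CharZero.eq_neg_self_iff]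
  conv_lhs => rw [← det_transpose, hM, det_neg, hn.neg_one_pow, neg_one_mul]

open MvPolynomial in
theorem Matrix.det_eq_zero_of_alternating_of_odd {R : Type*} [CommRing R] {m : ℕ} (hm : Odd m)
    {M : Matrix (Fin m) (Fin m) R} (hdiag : ∀ i, M i i = 0) (hskew : Mᵀ = -M) : M.det = 0 := by
  let N : Matrix (Fin m) (Fin m) (MvPolynomial (Fin m × Fin m) ℤ) :=
    of fun i j => X (i, j) - X (j, i)
  let φ : MvPolynomial (Fin m × Fin m) ℤ →+* R :=
    eval₂Hom (Int.castRingHom R) fun p => if p.1 < p.2 then M p.1 p.2 else 0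
  have hN : N.det = 0 := by
    refine det_eq_zero_of_transpose_eq_neg_of_odd (by simpa using hm) ?_
    ext i j
    simp [N]
  have hφN : N.map φ = M := by
    ext i j
    have hji : M j i = -M i j := congrFun (congrFun hskew i) j
    rcases lt_trichotomy i j with h | rfl | h
    · simp [N, φ, h, h.not_gt]
    · simp [N, hdiag]
    · simp [N, φ, h, h.not_gt, hji]
  rw [← hφN, ← RingHom.mapMatrix_apply, ← RingHom.map_det, hN, map_zero]

theorem LinearMap.BilinForm.IsAlt.not_separatingLeft_of_odd_finrank {R M : Type*} [CommRing R]
    [IsDomain R] [AddCommGroup M] [Module R M] [Module.Free R M] [Module.Finite R M]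
    {C : LinearMap.BilinForm R M} (hC : C.IsAlt) (hodd : Odd (finrank R M)) : ¬ C.SeparatingLeft := by
  let b := Module.finBasis R M
  rw [separatingLeft_iff_det_ne_zero b, not_not]
  refine Matrix.det_eq_zero_of_alternating_of_odd hodd (fun i => hC.self_eq_zero _) ?_
  ext i j
  rw [transpose_apply, Matrix.neg_apply, toMatrix₂_apply, toMatrix₂_apply, hC.neg_eq]

section

variable {K V : Type*} [Field K] [AddCommGroup V] [Module K V] {B : LinearMap.BilinForm K V}

theorem IsSkewOp.ker_ne_bot [FiniteDimensional K V] (hB : B.SeparatingLeft)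
    (hodd : Odd (finrank K V)) {S : V →ₗ[K] V} (hS : IsSkewOp B S) : ker S ≠ ⊥ := by
  intro hker
  have hsurj : Function.Surjective S :=
    injective_iff_surjective.mp (ker_eq_bot.mp hker)
  have hC : BilinForm.IsAlt (B.compl₂ S) := hS
  refine hC.not_separatingLeft_of_odd_finrank hodd fun x hx => hB x fun z => ?_
  obtain ⟨y, rfl⟩ := hsurj z
  exact hx y

@[simp]
theorem Eop_apply (a c x : V) : Eop B a c x = B x a • c := rfl

theorem ker_add_Eop_le_span {T : V →ₗ[K] V} (hT : Function.Injective T) {a w : V}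
    (hw : T w = a) : ker (T + Eop B a a) ≤ Submodule.span K {w} := by
  intro u hu
  have hTu : T u = T (-B u a • w) := by
    rw [map_smul, hw, neg_smul]
    exact eq_neg_of_add_eq_zero_left (by simpa using hu)
  exact Submodule.mem_span_singleton.mpr ⟨-B u a, (hT hTu).symm⟩

end

theorem Submodule.eq_span_singleton_of_le_of_ne_bot {K V : Type*} [Field K] [AddCommGroup V]
    [Module K V] {p : Submodule K V} {w : V} (hle : p ≤ span K {w}) (hne : p ≠ ⊥) :
    p = span K {w} := by
  obtain ⟨v, hv, hv0⟩ := p.ne_bot_iff.mp hne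
  obtain ⟨c, rfl⟩ := mem_span_singleton.mp (hle hv)
  have hc : c ≠ 0 := by rintro rfl; simp at hv0
  refine le_antisymm hle (span_le.mpr (Set.singleton_subset_iff.mpr ?_))
  simpa [smul_smul, hc] using p.smul_mem c⁻¹ hv

theorem ker_of_skew_correction_general
    (F U : Type*) [Field F]
    [AddCommGroup U] [Module F U] [FiniteDimensional F U]
    (hodd : Odd (Module.finrank F U))
    (B : LinearMap.BilinForm F U) (hsymm : B.IsSymm) (hnd : B.Nondegenerate)
    (T : U →ₗ[F] U) (hTinv : Function.Bijective T)
    (a : U) (hskew : IsSkewOp B (T + Eop B a a)) :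
    ∃ w : U, T w = a ∧
      LinearMap.ker (T + Eop B a a) = Submodule.span F {w} ∧ B a w ≠ 0 := by
  obtain ⟨w, hw⟩ := hTinv.surjective a
  have hne := hskew.ker_ne_bot hnd.1 hodd
  have hker : ker (T + Eop B a a) = Submodule.span F {w} :=
    Submodule.eq_span_singleton_of_le_of_ne_bot (ker_add_Eop_le_span hTinv.injective hw) hne
  refine ⟨w, hw, hker, ?_⟩
  have hwker : w ∈ ker (T + Eop B a a) := hker ▸ Submodule.mem_span_singleton_self w
  have hw0 : w ≠ 0 := by rintro rfl; exact hne (by simpa using hker)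
  rw [hsymm.eq]
  intro hBwa
  have hTw : T w = 0 := by simpa [hBwa] using hwker
  exact hw0 ((map_eq_zero_iff T hTinv.injective).mp hTw)

/-- If `n` is odd, `T` is invertible and self-adjoint, `a ≠ 0` and
`T + E_{a,a}` is skew-symmetric, then `ker (T + E_{a,a}) = ⟨a T⁻¹⟩` and
`B a (a T⁻¹) ≠ 0`. -/
theorem ker_of_skew_correction
    (F U : Type*) [Field F] [Fintype F] [CharP F 2]
    [AddCommGroup U] [Module F U] [FiniteDimensional F U]
    (hodd : Odd (Module.finrank F U))
    (B : LinearMap.BilinForm F U) (hsymm : B.IsSymm) (hnd : B.Nondegenerate)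
    (T : U →ₗ[F] U) (hT : IsSelfAdjOp B T) (hTinv : Function.Bijective T)
    (a : U) (ha : a ≠ 0) (hskew : IsSkewOp B (T + Eop B a a)) :
    ∃ w : U, T w = a ∧
      LinearMap.ker (T + Eop B a a) = Submodule.span F {w} ∧ B a w ≠ 0 :=
  ker_of_skew_correction_general F U hodd B hsymm hnd T hTinv a hskew
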